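/- arXiv:1709.01680 — 2 statements merged into one kernel-verified Lean document; each statement's English description precedes it below -/
import Mathlib

section
/- Let X be a first countable Hausdorff space, (x_n) a sequence in X, and I_φ = {A ⊆ ℕ : ‖A‖_φ = 0} an analytic P-ideal given by a lower semicontinuous submeasure φ with φ(ℕ) < ∞. Then ℓ is an I_φ-limit point of (x_n) if and only if u(ℓ) := lim_k ‖{n : x_n ∈ U_k}‖_φ > 0, where (U_k) is a decreasing local base at ℓ. -/
open Filter Topology Set
open scoped ENNReal

/-- An ideal on ℕ: contains all finite sets, closed under subsets and finite
unions, and proper. -/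
def IsIdeal (I : Set (Set ℕ)) : Prop :=
  (∀ A : Set ℕ, A.Finite → A ∈ I) ∧
  (∀ A B : Set ℕ, A ⊆ B → B ∈ I → A ∈ I) ∧
  (∀ A B : Set ℕ, A ∈ I → B ∈ I → A ∪ B ∈ I) ∧
  (Set.univ : Set ℕ) ∉ I

/-- `ℓ` is an `I`-limit point of `x`: some subsequence indexed by a set not in
`I` converges to `ℓ`. -/
def ILimitPoint {X : Type*} [TopologicalSpace X] (I : Set (Set ℕ)) (x : ℕ → X) (ℓ : X) : Prop :=
  ∃ A : Set ℕ, A ∉ I ∧ Tendsto x (atTop ⊓ 𝓟 A) (𝓝 ℓ)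

/-- `ℓ` is an `I`-cluster point of `x`. -/
def IClusterPoint {X : Type*} [TopologicalSpace X] (I : Set (Set ℕ)) (x : ℕ → X) (ℓ : X) : Prop :=
  ∀ U ∈ 𝓝 ℓ, {n | x n ∈ U} ∉ I

/-- A lower semicontinuous submeasure on ℕ. -/
def IsLSCSubmeasure (φ : Set ℕ → ℝ≥0∞) : Prop :=
  φ ∅ = 0 ∧ (∀ A B : Set ℕ, A ⊆ B → φ A ≤ φ B) ∧
  (∀ A B : Set ℕ, φ (A ∪ B) ≤ φ A + φ B) ∧
  (∀ A : Set ℕ, Tendsto (fun n => φ (A ∩ Set.Iio n)) atTop (𝓝 (φ A)))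

/-- `‖A‖_φ = lim_n φ(A \ {0,…,n-1})`, the limit of an antitone sequence,
realized as an infimum. -/
noncomputable def phiNorm (φ : Set ℕ → ℝ≥0∞) (A : Set ℕ) : ℝ≥0∞ :=
  ⨅ n : ℕ, φ (A \ Set.Iio n)

/-- The ideal of sets of asymptotic density zero. -/
def I0 : Set (Set ℕ) :=
  {S : Set ℕ | Tendsto (fun n => (Nat.card ↥(S ∩ Set.Iio n) : ℝ) / n) atTop (𝓝 0)}

/-- `u(ℓ) := lim_k ‖{n : x n ∈ U_k}‖_φ` along a decreasing local base at `ℓ`;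
its value is independent of the base and equals the infimum over all
neighborhoods. -/
noncomputable def uFun {X : Type*} [TopologicalSpace X] (φ : Set ℕ → ℝ≥0∞)
    (x : ℕ → X) (ℓ : X) : ℝ≥0∞ :=
  ⨅ U ∈ 𝓝 ℓ, phiNorm φ {n | x n ∈ U}

/-- Isolated points of a set. -/
def isolatedPts {X : Type*} [TopologicalSpace X] (B : Set X) : Set X :=
  {b ∈ B | ∃ U ∈ 𝓝 b, U ∩ B = {b}}


private lemma phiNorm_mono' {φ : Set ℕ → ℝ≥0∞} (hφ : IsLSCSubmeasure φ)
    {A B : Set ℕ} (h : A ⊆ B) : phiNorm φ A ≤ phiNorm φ B :=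
  iInf_mono fun n => hφ.2.1 _ _ (Set.diff_subset_diff_left h)

private lemma phiNorm_diff_Iio' (φ : Set ℕ → ℝ≥0∞) (A : Set ℕ) (N : ℕ) :
    phiNorm φ A ≤ phiNorm φ (A \ Set.Iio N) := by
  refine le_iInf fun n => ?_
  have h : (A \ Set.Iio N) \ Set.Iio n = A \ Set.Iio (max N n) := by
    ext m; simp only [Set.mem_diff, Set.mem_Iio, lt_max_iff]; tauto
  rw [h]
  exact iInf_le _ _

/-- `ℓ` is an `I_φ`-limit point iff `u(ℓ) > 0`. -/
theorem stmt5 {X : Type*} [TopologicalSpace X] [FirstCountableTopology X]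
    [T2Space X] (x : ℕ → X) (φ : Set ℕ → ℝ≥0∞) (hφ : IsLSCSubmeasure φ)
    (hfin : φ Set.univ < ⊤) (ℓ : X) :
    ILimitPoint {A : Set ℕ | phiNorm φ A = 0} x ℓ ↔ 0 < uFun φ x ℓ := by
  classical
  constructor
  · rintro ⟨A, hA, hT⟩
    have hApos : 0 < phiNorm φ A := pos_iff_ne_zero.mpr hA
    refine hApos.trans_le ?_
    unfold uFun
    refine le_iInf₂ fun U hU => ?_
    have h1 : {n | n ∈ A → x n ∈ U} ∈ (atTop : Filter ℕ) := by
      have h2 := hT hU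
      rw [Filter.mem_map, Filter.mem_inf_principal] at h2
      exact h2
    obtain ⟨N, hN⟩ := Filter.mem_atTop_sets.mp h1
    calc phiNorm φ A ≤ phiNorm φ (A \ Set.Iio N) := phiNorm_diff_Iio' φ A N
      _ ≤ phiNorm φ {n | x n ∈ U} :=
        phiNorm_mono' hφ (fun n hn => hN n (not_lt.mp hn.2) hn.1)
  · intro hu
    obtain ⟨U, hU⟩ := (𝓝 ℓ).exists_antitone_basis
    set S : ℕ → Set ℕ := fun k => {n | x n ∈ U k} with hS
    have hSu : ∀ k, uFun φ x ℓ ≤ phiNorm φ (S k) := fun k => by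
      unfold uFun
      exact iInf₂_le (U k) (hU.toHasBasis.mem_of_mem trivial)
    have hufin : uFun φ x ℓ ≠ ⊤ := by
      have h1 : uFun φ x ℓ ≤ phiNorm φ {n | x n ∈ (Set.univ : Set X)} := by
        unfold uFun
        exact iInf₂_le Set.univ Filter.univ_mem
      have h2 : phiNorm φ {n | x n ∈ (Set.univ : Set X)} ≤ φ Set.univ := by
        have h3 := iInf_le (fun n => φ ({n | x n ∈ (Set.univ : Set X)} \ Set.Iio n)) 0
        exact h3.trans (hφ.2.1 _ _ (fun a _ => trivial))
      exact ((h1.trans h2).trans_lt hfin).ne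
    have hhalf : uFun φ x ℓ / 2 < uFun φ x ℓ := ENNReal.half_lt_self hu.ne' hufin
    have hex : ∀ k n : ℕ, ∃ m : ℕ, n < m ∧
        uFun φ x ℓ / 2 < φ ((S k \ Set.Iio n) ∩ Set.Iio m) := by
      intro k n
      have hlim := hφ.2.2.2 (S k \ Set.Iio n)
      have hbig : uFun φ x ℓ / 2 < φ (S k \ Set.Iio n) :=
        hhalf.trans_le ((hSu k).trans (iInf_le _ n))
      have hev : ∀ᶠ m in atTop, uFun φ x ℓ / 2 < φ ((S k \ Set.Iio n) ∩ Set.Iio m) :=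
        hlim.eventually_const_lt hbig
      exact ((eventually_gt_atTop n).and hev).exists
    choose g hg1 hg2 using hex
    let N : ℕ → ℕ := fun k => Nat.rec 0 (fun k ih => g k ih) k
    have hNmono : StrictMono N := strictMono_nat_of_lt_succ fun k => hg1 k (N k)
    set B : ℕ → Set ℕ := fun k => (S k \ Set.Iio (N k)) ∩ Set.Iio (N (k + 1)) with hB
    have hBφ : ∀ k, uFun φ x ℓ / 2 < φ (B k) := fun k => hg2 k (N k)
    set A : Set ℕ := ⋃ k, B k with hA
    have hAnorm : uFun φ x ℓ / 2 ≤ phiNorm φ A := by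
      refine le_iInf fun m => ?_
      have hsub : B m ⊆ A \ Set.Iio m := by
        intro n hn
        have h1 : m ≤ n := (hNmono.le_apply).trans (not_lt.mp hn.1.2)
        exact ⟨Set.mem_iUnion.mpr ⟨m, hn⟩, fun hlt => absurd h1 (not_le.mpr hlt)⟩
      exact (hBφ m).le.trans (hφ.2.1 _ _ hsub)
    refine ⟨A, ?_, ?_⟩
    · intro h0
      have hpos : (0 : ℝ≥0∞) < uFun φ x ℓ / 2 := ENNReal.half_pos hu.ne'
      exact absurd (hAnorm.trans_eq h0) hpos.not_ge
    · rw [hU.toHasBasis.tendsto_right_iff]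
      intro k _
      rw [Filter.eventually_inf_principal]
      filter_upwards [Filter.eventually_ge_atTop (N k)] with n hn hnA
      obtain ⟨j, hj⟩ := Set.mem_iUnion.mp hnA
      have hkj : k ≤ j := by
        by_contra h
        push_neg at h
        have h2 : n < N k := lt_of_lt_of_le hj.2 (hNmono.le_iff_le.mpr h)
        exact absurd hn h2.not_ge
      exact hU.antitone hkj hj.1.1
end

section
/- Let X be a locally compact, first countable Hausdorff space, (x_n) a sequence in X, and I_φ an analytic P-ideal given by a lower semicontinuous submeasure φ with φ(ℕ) < ∞. Then every isolated point of the set of I_φ-cluster points of (x_n) is an I_φ-limit point of (x_n). -/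
open Filter Topology Set
open scoped ENNReal

/-! Around an isolated `I_φ`-cluster point `ℓ` take a compact neighbourhood `K` containing no
other cluster point. For any neighbourhood `V` of `ℓ`, the compact set `K \ int V` is covered by
finitely many neighbourhoods with `‖·‖_φ`-null visiting sets, so `‖{n : x n ∈ V}‖_φ` is at
least `a := ‖{n : x n ∈ K}‖_φ > 0`. Fixing `0 < b < a` and a decreasing local base `U k`, lower
semicontinuity of `φ` gives consecutive finite blocks `[m_k, m_{k+1})` on which
`{n : x n ∈ U k}` has `φ`-mass above `b`; their union indexes a subsequence converging to `ℓ`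
whose `‖·‖_φ` is at least `b`. -/

namespace IsLSCSubmeasure

variable {φ : Set ℕ → ℝ≥0∞}

theorem mono (hφ : IsLSCSubmeasure φ) {A B : Set ℕ} (h : A ⊆ B) : φ A ≤ φ B :=
  hφ.2.1 A B h

theorem phiNorm_mono (hφ : IsLSCSubmeasure φ) {A B : Set ℕ} (h : A ⊆ B) :
    phiNorm φ A ≤ phiNorm φ B :=
  iInf_mono fun _ => hφ.mono (sdiff_subset_sdiff_left h)

theorem phiNorm_union_le (hφ : IsLSCSubmeasure φ) (A B : Set ℕ) :
    phiNorm φ (A ∪ B) ≤ phiNorm φ A + phiNorm φ B := by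
  refine (iInf_mono fun n => (hφ.mono (union_sdiff_distrib).le).trans (hφ.2.2.1 _ _)).trans ?_
  refine (ENNReal.iInf_add_iInf fun i j => ⟨max i j, ?_⟩).ge
  exact add_le_add (hφ.mono (sdiff_subset_sdiff_right (Iio_subset_Iio (le_max_left i j))))
    (hφ.mono (sdiff_subset_sdiff_right (Iio_subset_Iio (le_max_right i j))))

theorem phiNorm_empty (hφ : IsLSCSubmeasure φ) : phiNorm φ ∅ = 0 :=
  le_antisymm ((iInf_le _ 0).trans_eq (by rw [empty_sdiff, hφ.1])) zero_le

theorem phiNorm_union_eq_zero (hφ : IsLSCSubmeasure φ) {A B : Set ℕ} (hA : phiNorm φ A = 0)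
    (hB : phiNorm φ B = 0) :
    phiNorm φ (A ∪ B) = 0 :=
  le_antisymm ((hφ.phiNorm_union_le A B).trans_eq (by rw [hA, hB, add_zero])) zero_le

theorem exists_lt_inter_Ico (hφ : IsLSCSubmeasure φ) {A : Set ℕ} {b : ℝ≥0∞}
    (hb : b < phiNorm φ A) (m : ℕ) :
    ∃ m' > m, b < φ (A ∩ Ico m m') := by
  have hlim := hφ.2.2.2 (A \ Iio m)
  have hev := hlim.eventually (eventually_gt_nhds (hb.trans_le (iInf_le _ m)))
  obtain ⟨m', hm', hbm'⟩ := ((eventually_gt_atTop m).and hev).exists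
  refine ⟨m', hm', hbm'.trans_le (hφ.mono ?_)⟩
  rintro n ⟨⟨hnA, hnm⟩, hnm'⟩
  exact ⟨hnA, not_lt.1 hnm, hnm'⟩

theorem exists_phiNorm_ge_of_antitone (hφ : IsLSCSubmeasure φ) {A : ℕ → Set ℕ} (hA : Antitone A)
    {b : ℝ≥0∞} (hb : ∀ k, b < phiNorm φ (A k)) :
    ∃ S, b ≤ phiNorm φ S ∧ ∀ k, ∀ᶠ n in atTop, n ∈ S → n ∈ A k := by
  choose next hnext_gt hnext using fun k m => hφ.exists_lt_inter_Ico (hb k) m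
  let ms : ℕ → ℕ := fun k => Nat.rec 0 next k
  have hms : StrictMono ms := strictMono_nat_of_lt_succ fun k => hnext_gt k (ms k)
  refine ⟨⋃ k, A k ∩ Ico (ms k) (ms (k + 1)), le_iInf fun m => ?_, fun k => ?_⟩
  · refine (hnext m (ms m)).le.trans (hφ.mono ?_)
    rintro n ⟨hnA, hnm, hnm'⟩
    exact ⟨mem_iUnion.2 ⟨m, hnA, hnm, hnm'⟩, not_lt.2 ((hms.id_le m).trans hnm)⟩
  · filter_upwards [eventually_ge_atTop (ms k)] with n hkn hn
    obtain ⟨j, hnA, -, hnj⟩ := mem_iUnion.1 hn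
    exact hA (Nat.lt_succ_iff.1 (hms.lt_iff_lt.1 (hkn.trans_lt hnj))) hnA

theorem phiNorm_setOf_mem_eq_zero_of_isCompact (hφ : IsLSCSubmeasure φ) {X : Type*}
    [TopologicalSpace X] {x : ℕ → X} {K : Set X} (hK : IsCompact K)
    (hK_cl : ∀ p ∈ K, ¬IClusterPoint {A : Set ℕ | phiNorm φ A = 0} x p) :
    phiNorm φ {n | x n ∈ K} = 0 := by
  refine hK.induction_on (p := fun s => phiNorm φ {n | x n ∈ s} = 0) ?_ ?_ ?_ ?_
  · simpa using hφ.phiNorm_empty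
  · exact fun s t hst ht => le_antisymm ((hφ.phiNorm_mono fun n hn => hst hn).trans_eq ht) zero_le
  · exact fun s t hs ht => hφ.phiNorm_union_eq_zero hs ht
  · intro p hp
    obtain ⟨U, hU, hU0⟩ := not_forall₂.1 (hK_cl p hp)
    exact ⟨U, mem_nhdsWithin_of_mem_nhds hU, not_not.1 hU0⟩

theorem phiNorm_setOf_mem_le_of_isCompact (hφ : IsLSCSubmeasure φ) {X : Type*}
    [TopologicalSpace X] {x : ℕ → X} {K V : Set X} (hK : IsCompact K) (hV : IsOpen V)
    (hKV_cl : ∀ p ∈ K \ V, ¬IClusterPoint {A : Set ℕ | phiNorm φ A = 0} x p) :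
    phiNorm φ {n | x n ∈ K} ≤ phiNorm φ {n | x n ∈ V} :=
  calc phiNorm φ {n | x n ∈ K}
      ≤ phiNorm φ ({n | x n ∈ K \ V} ∪ {n | x n ∈ V}) :=
        hφ.phiNorm_mono fun n hn => (em (x n ∈ V)).symm.imp (⟨hn, ·⟩) id
    _ ≤ phiNorm φ {n | x n ∈ K \ V} + phiNorm φ {n | x n ∈ V} := hφ.phiNorm_union_le _ _
    _ = phiNorm φ {n | x n ∈ V} := by
        rw [hφ.phiNorm_setOf_mem_eq_zero_of_isCompact (hK.diff hV) hKV_cl, zero_add]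

end IsLSCSubmeasure

theorem stmt12_general {X : Type*} [TopologicalSpace X] [FirstCountableTopology X]
    [T2Space X] (hloc : ∀ a : X, ∃ U ∈ 𝓝 a, IsCompact (closure U))
    (x : ℕ → X) (φ : Set ℕ → ℝ≥0∞) (hφ : IsLSCSubmeasure φ)
    (ℓ : X) (hmem : ℓ ∈ isolatedPts {p : X | IClusterPoint {A : Set ℕ | phiNorm φ A = 0} x p}) :
    ILimitPoint {A : Set ℕ | phiNorm φ A = 0} x ℓ := by
  have : WeaklyLocallyCompactSpace X := ⟨fun a =>
    let ⟨U, hU, hUc⟩ := hloc a; ⟨closure U, hUc, mem_of_superset hU subset_closure⟩⟩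
  obtain ⟨hℓ, W, hW, hW_cl⟩ := hmem
  obtain ⟨K, hK, hKW, hKc⟩ := local_compact_nhds hW
  have hK_le : ∀ V ∈ 𝓝 ℓ, phiNorm φ {n | x n ∈ K} ≤ phiNorm φ {n | x n ∈ V} := by
    intro V hV
    refine (hφ.phiNorm_setOf_mem_le_of_isCompact hKc isOpen_interior
      fun p hp hp_cl => hp.2 ?_).trans (hφ.phiNorm_mono (preimage_mono (f := x) interior_subset))
    have hpℓ : p ∈ W ∩ {q | IClusterPoint _ x q} := ⟨hKW hp.1, hp_cl⟩
    rw [hW_cl, mem_singleton_iff] at hpℓ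
    exact hpℓ ▸ mem_interior_iff_mem_nhds.2 hV
  obtain ⟨b, hb0, hbK⟩ := exists_between (pos_iff_ne_zero.2 (hℓ K hK))
  obtain ⟨U, hU⟩ := (𝓝 ℓ).exists_antitone_basis
  obtain ⟨S, hbS, hSU⟩ := hφ.exists_phiNorm_ge_of_antitone (A := fun k => {n | x n ∈ U k})
    (fun i j hij n hn => hU.antitone hij hn) fun k => hbK.trans_le (hK_le _ (hU.mem k))
  exact ⟨S, (hb0.trans_le hbS).ne',
    hU.toHasBasis.tendsto_right_iff.2 fun k _ => eventually_inf_principal.2 (hSU k)⟩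

/-- in a locally compact first countable Hausdorff space, every
isolated `I_φ`-cluster point is an `I_φ`-limit point. -/
theorem stmt12 {X : Type*} [TopologicalSpace X] [FirstCountableTopology X]
    [T2Space X] (hloc : ∀ a : X, ∃ U ∈ 𝓝 a, IsCompact (closure U))
    (x : ℕ → X) (φ : Set ℕ → ℝ≥0∞) (hφ : IsLSCSubmeasure φ) (hfin : φ Set.univ < ⊤)
    (ℓ : X) (hmem : ℓ ∈ isolatedPts {p : X | IClusterPoint {A : Set ℕ | phiNorm φ A = 0} x p}) :
    ILimitPoint {A : Set ℕ | phiNorm φ A = 0} x ℓ :=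
  stmt12_general hloc x φ hφ ℓ hmem
end
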